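/- Let a < b and let ν be the arcsine measure on [a,b] with density 1/(π√((b-x)(x-a))). Then for real x > b, the Cauchy transform equals C(x) = 1/√((x-a)(x-b)), and in particular C(x) > 0 and C(x) → 0 as x → ∞. -/

import Mathlib

/-!
For `x > b`, let `h` be the Möbius transformation of `t` with `h a = 1`, `h b = -1` and
`1 - h t ^ 2 = 4 (x - a)(x - b)(b - t)(t - a) / ((b - a)(x - t))²`. Then
`t ↦ -arcsin (h t) / √((x - a)(x - b))` is a primitive of `1 / (√((b - t)(t - a)) (x - t))`
on `(a, b)`, continuous on `[a, b]`. The integrand is nonnegative, hence integrable, and the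
fundamental theorem of calculus gives `π / √((x - a)(x - b))`, which tends to `0` with `x`.
-/

open MeasureTheory Filter Set

noncomputable def arcsineCauchyArg (a b x t : ℝ) : ℝ :=
  ((b - a) ^ 2 - (2 * x - a - b) * (2 * t - a - b)) / (2 * (b - a) * (x - t))

noncomputable def arcsineCauchyPrimitive (a b x t : ℝ) : ℝ :=
  -Real.arcsin (arcsineCauchyArg a b x t) / √((x - a) * (x - b))

section

variable {a b x t : ℝ}

theorem arcsineCauchyArg_left (hab : a < b) (hx : b < x) : arcsineCauchyArg a b x a = 1 := by
  rw [arcsineCauchyArg, div_eq_one_iff_eq (by nlinarith)]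
  ring

theorem arcsineCauchyArg_right (hab : a < b) (hx : b < x) : arcsineCauchyArg a b x b = -1 := by
  rw [arcsineCauchyArg, div_eq_iff (by nlinarith)]
  ring

theorem one_sub_arcsineCauchyArg_sq (hab : a ≠ b) (ht : t ≠ x) :
    1 - arcsineCauchyArg a b x t ^ 2
      = 4 * ((x - a) * (x - b)) * ((b - t) * (t - a)) / ((b - a) * (x - t)) ^ 2 := by
  have : b - a ≠ 0 := sub_ne_zero.2 hab.symm
  have : x - t ≠ 0 := sub_ne_zero.2 ht.symm
  rw [arcsineCauchyArg]
  field_simp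
  ring

theorem sqrt_one_sub_arcsineCauchyArg_sq (hab : a < b) (hx : b < x) (ht : t ∈ Ioo a b) :
    √(1 - arcsineCauchyArg a b x t ^ 2)
      = 2 * √((x - a) * (x - b)) * √((b - t) * (t - a)) / ((b - a) * (x - t)) := by
  have hxt : 0 < x - t := by linarith [ht.2]
  rw [one_sub_arcsineCauchyArg_sq hab.ne (ht.2.trans hx).ne, Real.sqrt_div' _ (sq_nonneg _),
    Real.sqrt_sq (by nlinarith), Real.sqrt_mul' _ (by nlinarith [ht.1, ht.2]),
    Real.sqrt_mul' _ (by nlinarith), show (4 : ℝ) = 2 ^ 2 by norm_num, Real.sqrt_sq two_pos.le]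

theorem arcsineCauchyArg_mem_Ioo (hab : a < b) (hx : b < x) (ht : t ∈ Ioo a b) :
    arcsineCauchyArg a b x t ∈ Ioo (-1) 1 := by
  have hxt : 0 < x - t := by linarith [ht.2]
  have hpos : 0 < 1 - arcsineCauchyArg a b x t ^ 2 := by
    rw [one_sub_arcsineCauchyArg_sq hab.ne (ht.2.trans hx).ne]
    have : 0 < (x - a) * (x - b) := by nlinarith
    have : 0 < (b - t) * (t - a) := by nlinarith [ht.1, ht.2]
    positivity
  exact abs_lt.1 ((sq_lt_one_iff_abs_lt_one _).1 (by linarith))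

theorem hasDerivAt_arcsineCauchyArg (hab : a ≠ b) (ht : t ≠ x) :
    HasDerivAt (arcsineCauchyArg a b x)
      (-2 * ((x - a) * (x - b)) / ((b - a) * (x - t) ^ 2)) t := by
  have : b - a ≠ 0 := sub_ne_zero.2 hab.symm
  have : x - t ≠ 0 := sub_ne_zero.2 ht.symm
  have hnum : HasDerivAt (fun s => (b - a) ^ 2 - (2 * x - a - b) * (2 * s - a - b))
      (-((2 * x - a - b) * 2)) t := by
    simpa using (((hasDerivAt_id' t).const_mul 2 |>.sub_const a |>.sub_const b).const_mul
      (2 * x - a - b)).const_sub ((b - a) ^ 2)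
  have hden : HasDerivAt (fun s => 2 * (b - a) * (x - s)) (2 * (b - a) * (-1)) t :=
    ((hasDerivAt_id' t).const_sub x).const_mul _
  refine (hnum.div hden (by positivity)).congr_deriv ?_
  field_simp
  ring

theorem hasDerivAt_arcsineCauchyPrimitive (hab : a < b) (hx : b < x) (ht : t ∈ Ioo a b) :
    HasDerivAt (arcsineCauchyPrimitive a b x) (1 / √((b - t) * (t - a)) / (x - t)) t := by
  have hxt : 0 < x - t := by linarith [ht.2]
  have hS : 0 < √((x - a) * (x - b)) := Real.sqrt_pos.2 (by nlinarith)
  have hs : 0 < √((b - t) * (t - a)) := Real.sqrt_pos.2 (by nlinarith [ht.1, ht.2])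
  have hmem := arcsineCauchyArg_mem_Ioo hab hx ht
  have harcsin := (Real.hasDerivAt_arcsin hmem.1.ne' hmem.2.ne).comp t
    (hasDerivAt_arcsineCauchyArg (x := x) hab.ne (ht.2.trans hx).ne)
  refine (harcsin.neg.div_const _).congr_deriv ?_
  rw [sqrt_one_sub_arcsineCauchyArg_sq hab hx ht]
  have : b - a ≠ 0 := (sub_pos.2 hab).ne'
  field_simp
  rw [Real.sq_sqrt (by nlinarith)]

theorem continuousOn_arcsineCauchyPrimitive (hab : a < b) (hx : b < x) :
    ContinuousOn (arcsineCauchyPrimitive a b x) (Icc a b) := by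
  refine ((Real.continuous_arcsin.comp_continuousOn ?_).neg).div_const _
  refine ContinuousOn.div (by fun_prop) (by fun_prop) fun t ht => ?_
  have : 0 < b - a := sub_pos.2 hab
  have : 0 < x - t := by linarith [ht.2]
  positivity

theorem integral_Ioo_one_div_sqrt_mul_sub (hab : a < b) (hx : b < x) :
    ∫ t in Ioo a b, 1 / √((b - t) * (t - a)) / (x - t) = Real.pi / √((x - a) * (x - b)) := by
  have hderiv : ∀ t ∈ Ioo a b, HasDerivAt (arcsineCauchyPrimitive a b x)
      (1 / √((b - t) * (t - a)) / (x - t)) t := fun _ ↦ hasDerivAt_arcsineCauchyPrimitive hab hx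
  have hcont := continuousOn_arcsineCauchyPrimitive hab hx
  have hnonneg : ∀ t ∈ Ioo a b, 0 ≤ 1 / √((b - t) * (t - a)) / (x - t) := fun t ht ↦ by
    have : 0 < x - t := by linarith [ht.2]
    positivity
  have hint : IntervalIntegrable (fun t ↦ 1 / √((b - t) * (t - a)) / (x - t)) volume a b :=
    (intervalIntegrable_iff_integrableOn_Ioc_of_le hab.le).2
      (intervalIntegral.integrableOn_deriv_of_nonneg hcont hderiv hnonneg)
  rw [integral_Ioc_eq_integral_Ioo.symm, ← intervalIntegral.integral_of_le hab.le,
    intervalIntegral.integral_eq_sub_of_hasDerivAt_of_le hab.le hcont hderiv hint,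
    arcsineCauchyPrimitive, arcsineCauchyPrimitive, arcsineCauchyArg_left hab hx,
    arcsineCauchyArg_right hab hx, Real.arcsin_one, Real.arcsin_neg_one]
  ring

end

theorem tendsto_one_div_sqrt_mul_sub_atTop (a b : ℝ) :
    Tendsto (fun x : ℝ ↦ 1 / √((x - a) * (x - b))) atTop (nhds 0) := by
  have h : Tendsto (fun x : ℝ ↦ (x - a) * (x - b)) atTop atTop :=
    (tendsto_atTop_add_const_right _ _ tendsto_id).atTop_mul_atTop₀
      (tendsto_atTop_add_const_right _ _ tendsto_id)
  simp only [one_div]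
  exact (Real.tendsto_sqrt_atTop.comp h).inv_tendsto_atTop

theorem arcsine_cauchy_transform (a b : ℝ) (hab : a < b) :
    (∀ x : ℝ, b < x →
        (∫ t in Set.Ioo a b, (1 / (Real.pi * Real.sqrt ((b - t) * (t - a)))) / (x - t))
            = 1 / Real.sqrt ((x - a) * (x - b)) ∧
          0 < ∫ t in Set.Ioo a b, (1 / (Real.pi * Real.sqrt ((b - t) * (t - a)))) / (x - t)) ∧
      Tendsto
        (fun x : ℝ => ∫ t in Set.Ioo a b, (1 / (Real.pi * Real.sqrt ((b - t) * (t - a)))) / (x - t))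
        atTop (nhds 0) := by
  have hformula : ∀ x, b < x →
      ∫ t in Ioo a b, 1 / (Real.pi * √((b - t) * (t - a))) / (x - t) = 1 / √((x - a) * (x - b)) := by
    intro x hx
    have hintegrand : ∀ t, 1 / (Real.pi * √((b - t) * (t - a))) / (x - t)
        = 1 / √((b - t) * (t - a)) / (x - t) / Real.pi := fun t ↦ by ring
    simp_rw [hintegrand, integral_div, integral_Ioo_one_div_sqrt_mul_sub hab hx]
    field_simp
  refine ⟨fun x hx ↦ ⟨hformula x hx, ?_⟩, ?_⟩
  · rw [hformula x hx]
    exact one_div_pos.2 (Real.sqrt_pos.2 (by nlinarith))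
  · exact (tendsto_one_div_sqrt_mul_sub_atTop a b).congr'
      (eventually_gt_atTop b |>.mono fun x hx ↦ (hformula x hx).symm)
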